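/- arXiv:math/0410262 — 5 statements merged into one kernel-verified Lean document; each statement's English description precedes it below -/
import Mathlib

section
/- Let N be a positive integer and x a nonzero complex number with (x-1)^N = (-x-1)^N. Then x is purely imaginary; more precisely, x = i·tan(Aπ/N) for some integer A. -/
open Real Complex

/-- If `(x-1)^N = (-x-1)^N` for a nonzero complex `x` and `N ≥ 1`, then `x` is purely
imaginary; more precisely `x = i·tan(Aπ/N)` for some integer `A`. -/
theorem purely_imaginary_of_pow_eq (N : ℕ) (hN : 0 < N) (x : ℂ) (hx : x ≠ 0)
    (h : (x - 1) ^ N = (-x - 1) ^ N) :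
    x.re = 0 ∧ ∃ A : ℤ, x = Complex.I * (Real.tan (A * π / N) : ℝ) := by
  have : NeZero N := ⟨hN.ne'⟩
  have hNc : (N : ℂ) ≠ 0 := Nat.cast_ne_zero.mpr hN.ne'
  have hden : (-x - 1 : ℂ) ≠ 0 := by
    intro h0
    have hx1 : x = -1 := by linear_combination -h0
    rw [hx1] at h
    norm_num [zero_pow hN.ne'] at h
  have hzN : ((x - 1) / (-x - 1)) ^ N = 1 := by
    rw [div_pow, h, div_self (pow_ne_zero _ hden)]
  obtain ⟨k, hk, hke⟩ :=
    (Complex.isPrimitiveRoot_exp N hN.ne').eq_pow_of_pow_eq_one hzN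
  set θ : ℝ := π * k / N with hθ
  have hzexp : (x - 1) / (-x - 1) = Complex.exp (((2 * θ : ℝ) : ℂ) * I) := by
    rw [← hke, ← Complex.exp_nat_mul]
    congr 1
    rw [hθ]
    push_cast
    field_simp
  have hxz : x - 1 = Complex.exp (((2 * θ : ℝ) : ℂ) * I) * (-x - 1) := by
    rw [← hzexp, div_mul_cancel₀ _ hden]
  have hw : Complex.exp ((θ : ℂ) * I) = Complex.cos θ + Complex.sin θ * I :=
    Complex.exp_mul_I _
  have hz2 : Complex.exp (((2 * θ : ℝ) : ℂ) * I)
      = (Complex.cos θ + Complex.sin θ * I) ^ 2 := by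
    rw [← hw, sq, ← Complex.exp_add]
    congr 1
    push_cast
    ring
  set c := Complex.cos ((θ : ℝ) : ℂ) with hc_def
  set s := Complex.sin ((θ : ℝ) : ℂ) with hs_def
  have pyth : s ^ 2 + c ^ 2 = 1 := Complex.sin_sq_add_cos_sq _
  have h1z : (1 : ℂ) + Complex.exp (((2 * θ : ℝ) : ℂ) * I) ≠ 0 := by
    intro h0
    have h2 : (2 : ℂ) = 0 := by linear_combination -hxz + (x + 1) * h0
    norm_num at h2
  have hx2 : x * (1 + (c + s * I) ^ 2) = 1 - (c + s * I) ^ 2 := by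
    rw [← hz2]
    linear_combination hxz
  have hc : c ≠ 0 := by
    intro hc0
    apply h1z
    rw [hz2]
    linear_combination (2 * c + 2 * s * I) * hc0 - pyth + s ^ 2 * Complex.I_sq
  have hne : c + s * I ≠ 0 := by rw [← hw]; exact Complex.exp_ne_zero _
  have key : x * c * (c + s * I) = (-I * s) * (c + s * I) := by
    linear_combination (1 / 2 : ℂ) * hx2 + ((x - 1) / 2) * pyth
      + ((1 - x) / 2) * s ^ 2 * Complex.I_sq
  have heq : x * c = -I * s := mul_right_cancel₀ hne key
  have hfin : x = Complex.I * ((Real.tan (((-k : ℤ) : ℝ) * π / N) : ℝ) : ℂ) := by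
    have ht : ((-k : ℤ) : ℝ) * π / N = -θ := by rw [hθ]; push_cast; ring
    rw [ht, Real.tan_neg, Real.tan_eq_sin_div_cos]
    push_cast
    rw [← hc_def, ← hs_def]
    field_simp
    linear_combination heq
  refine ⟨?_, ⟨-k, by exact_mod_cast hfin⟩⟩
  rw [hfin, Complex.mul_re, Complex.I_re, Complex.I_im, Complex.ofReal_im]
  ring
end

section
/- tan(π/5)·tan(2π/5) = √5, i.e. the ratio tan(2π/5)/tan(π/10) equals 5 + 2√5 and tan(π/5)/tan(π/10) equals √5. -/
open Real

/-! From `cos (π/5) = (1 + √5)/4` and the double-angle formula, `cos (2π/5) = (√5 - 1)/4`;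
via `tan² = cos⁻² - 1` this gives `tan² (π/5) = 5 - 2√5` and `tan² (2π/5) = 5 + 2√5`, whose
product is `5`. Since `π/10` and `2π/5` are complementary, `tan (π/10) = tan (2π/5)⁻¹`, so both
ratios become products of these tangents. -/

namespace Real

theorem tan_sq_eq_inv_cos_sq_sub_one {x : ℝ} (hx : cos x ≠ 0) : tan x ^ 2 = (cos x ^ 2)⁻¹ - 1 := by
  rw [← inv_one_add_tan_sq hx, inv_inv, add_sub_cancel_left]

theorem cos_two_pi_div_five : cos (2 * π / 5) = (√5 - 1) / 4 := by
  have h5 : √5 ^ 2 = 5 := sq_sqrt (by norm_num)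
  rw [mul_div_assoc, cos_two_mul, cos_pi_div_five]
  linear_combination h5 / 8

theorem tan_pi_div_five_sq : tan (π / 5) ^ 2 = 5 - 2 * √5 := by
  have h5 : √5 ^ 2 = 5 := sq_sqrt (by norm_num)
  rw [tan_sq_eq_inv_cos_sq_sub_one, cos_pi_div_five]
  · field_simp
    linear_combination (2 * √5 - 2) * h5
  · rw [cos_pi_div_five]; positivity

theorem tan_two_pi_div_five_sq : tan (2 * π / 5) ^ 2 = 5 + 2 * √5 := by
  have h5 : √5 ^ 2 = 5 := sq_sqrt (by norm_num)
  have hpos : (0 : ℝ) < √5 - 1 := sub_pos.2 (lt_sqrt_of_sq_lt (by norm_num))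
  rw [tan_sq_eq_inv_cos_sq_sub_one, cos_two_pi_div_five]
  · field_simp
    linear_combination (-2 * √5 - 2) * h5
  · rw [cos_two_pi_div_five]; positivity

theorem tan_pi_div_five_mul_tan_two_pi_div_five : tan (π / 5) * tan (2 * π / 5) = √5 := by
  have h₁ : 0 < tan (π / 5) := tan_pos_of_pos_of_lt_pi_div_two (by positivity) (by linarith [pi_pos])
  have h₂ : 0 < tan (2 * π / 5) := tan_pos_of_pos_of_lt_pi_div_two (by positivity) (by linarith [pi_pos])
  rw [← sqrt_sq (mul_pos h₁ h₂).le, mul_pow, tan_pi_div_five_sq, tan_two_pi_div_five_sq]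
  congr 1
  linear_combination (-4:ℝ) * sq_sqrt (show (0:ℝ) ≤ 5 by norm_num)

theorem tan_pi_div_ten : tan (π / 10) = (tan (2 * π / 5))⁻¹ := by
  rw [← tan_pi_div_two_sub]; ring_nf

end Real

/-- `tan(π/5)·tan(2π/5) = √5`; the ratio `tan(2π/5)/tan(π/10)` is `5+2√5` and
`tan(π/5)/tan(π/10)` is `√5`. -/
theorem tan_ratios_pi_div_ten :
    Real.tan (π / 5) * Real.tan (2 * π / 5) = Real.sqrt 5 ∧
    Real.tan (2 * π / 5) / Real.tan (π / 10) = 5 + 2 * Real.sqrt 5 ∧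
    Real.tan (π / 5) / Real.tan (π / 10) = Real.sqrt 5 := by
  rw [tan_pi_div_ten, div_inv_eq_mul, div_inv_eq_mul, ← sq, tan_two_pi_div_five_sq,
    tan_pi_div_five_mul_tan_two_pi_div_five]
  exact ⟨rfl, rfl, rfl⟩
end

section
/- tan(3π/10)/tan(π/5) = 1 + 2/√5. -/
open Real

/-- `tan(3π/10)/tan(π/5) = 1 + 2/√5`. -/
theorem tan_ratio_three_tenths :
    Real.tan (3 * π / 10) / Real.tan (π / 5) = 1 + 2 / Real.sqrt 5 := by
  have hπ := Real.pi_pos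
  have hs : Real.sin (π / 5) > 0 := Real.sin_pos_of_pos_of_lt_pi (by linarith) (by linarith)
  have hc : Real.cos (π / 5) = (1 + Real.sqrt 5) / 4 := Real.cos_pi_div_five
  have hc0 : Real.cos (π / 5) > 0 := by
    rw [hc]; positivity
  have h1 : (3 : ℝ) * π / 10 = π / 2 - π / 5 := by ring
  rw [h1, Real.tan_pi_div_two_sub, Real.tan_eq_sin_div_cos]
  have hsq : Real.sin (π / 5) ^ 2 = 1 - Real.cos (π / 5) ^ 2 := by
    have := Real.sin_sq_add_cos_sq (π / 5); linarith
  have h5 : Real.sqrt 5 ^ 2 = 5 := Real.sq_sqrt (by norm_num)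
  have h5p : Real.sqrt 5 > 0 := Real.sqrt_pos.mpr (by norm_num)
  have key : (Real.sin (π / 5) / Real.cos (π / 5))⁻¹ / (Real.sin (π / 5) / Real.cos (π / 5))
      = Real.cos (π / 5) ^ 2 / Real.sin (π / 5) ^ 2 := by
    field_simp
  rw [key, hsq, hc]
  rw [div_eq_iff (by nlinarith), ]
  field_simp
  nlinarith [sq_nonneg (Real.sqrt 5), hsq, h5, hc, h5p, hs, hc0]
end

section
/- Let x = exp(2πi/5) and y = exp(4πi/5), and let M₁₀ be the set of complex numbers whose argument is an integer multiple of π/5 (together with 0). For a real number r: x - r ∈ M₁₀ only if r = -1 or r ≥ 0, and y - r ∈ M₁₀ only if r ≤ 0. Consequently there is no real r ∉ {-1, 0} with both x - r ∈ M₁₀ and y - r ∈ M₁₀. -/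
open Real Complex

lemma decagon_key (θ r : ℝ) (hθ0 : 0 < θ) (hθπ : θ < Real.pi) (k : ℤ)
    (h : Complex.arg (Complex.exp ((θ : ℂ) * Complex.I) - (r : ℂ)) = k * (Real.pi / 5)) :
    0 < k ∧ k < 5 ∧
      r * Real.sin ((k : ℝ) * (Real.pi / 5)) = Real.sin ((k : ℝ) * (Real.pi / 5) - θ) := by
  set z : ℂ := Complex.exp ((θ : ℂ) * Complex.I) - (r : ℂ) with hz
  have him : z.im = Real.sin θ := by simp [hz]
  have hre : z.re = Real.cos θ - r := by simp [hz]
  have hsin : 0 < Real.sin θ := Real.sin_pos_of_pos_of_lt_pi hθ0 hθπ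
  have himpos : 0 < z.im := him ▸ hsin
  have hzne : z ≠ 0 := by
    intro h0
    rw [h0] at himpos
    simp at himpos
  have hpi : 0 < Real.pi := Real.pi_pos
  have harg0 : 0 < Complex.arg z := by
    rcases lt_or_eq_of_le (Complex.arg_nonneg_iff.mpr himpos.le) with h' | h'
    · exact h'
    · exfalso
      have := Complex.arg_eq_zero_iff.mp h'.symm
      exact himpos.ne' this.2
  have hargπ : Complex.arg z < Real.pi := by
    rcases lt_or_eq_of_le (Complex.arg_le_pi z) with h' | h'
    · exact h'
    · exfalso
      have := Complex.arg_eq_pi_iff.mp h'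
      exact himpos.ne' this.2
  have hk0 : 0 < k := by
    by_contra hk
    push_neg at hk
    have : (k : ℝ) * (Real.pi / 5) ≤ 0 := by
      apply mul_nonpos_of_nonpos_of_nonneg
      · exact_mod_cast hk
      · positivity
    rw [h] at harg0; linarith
  have hk5 : k < 5 := by
    by_contra hk
    push_neg at hk
    have : (5 : ℝ) ≤ (k : ℝ) := by exact_mod_cast hk
    have : Real.pi ≤ (k : ℝ) * (Real.pi / 5) := by nlinarith
    rw [h] at hargπ; linarith
  refine ⟨hk0, hk5, ?_⟩
  have hc : Real.cos (Complex.arg z) = z.re / ‖z‖ := Complex.cos_arg hzne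
  have hs : Real.sin (Complex.arg z) = z.im / ‖z‖ := Complex.sin_arg z
  have habs : 0 < ‖z‖ := by
    simpa [norm_pos_iff] using hzne
  rw [h, him] at hs
  rw [h, hre] at hc
  have h1 : Real.sin θ = ‖z‖ * Real.sin ((k : ℝ) * (Real.pi / 5)) := by
    rw [hs]; field_simp
  have h2 : Real.cos θ - r = ‖z‖ * Real.cos ((k : ℝ) * (Real.pi / 5)) := by
    rw [hc]; field_simp
  rw [Real.sin_sub]
  linear_combination Real.cos ((k : ℝ) * (Real.pi / 5)) * h1 -
    Real.sin ((k : ℝ) * (Real.pi / 5)) * h2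

/-- Let `x = e^{2πi/5}`, `y = e^{4πi/5}` and let `M₁₀` be the set of complex numbers
whose argument is an integer multiple of `π/5` (together with `0`). For real `r`:
`x - r ∈ M₁₀` only if `r = -1` or `r ≥ 0`; `y - r ∈ M₁₀` only if `r ≤ 0`; hence no
real `r ∉ {-1, 0}` has both `x - r` and `y - r` in `M₁₀`. -/
theorem decagon_no_extra_periodic_point :
    ∀ x y : ℂ, ∀ M : Set ℂ,
      x = Complex.exp (2 * Real.pi * Complex.I / 5) →
      y = Complex.exp (4 * Real.pi * Complex.I / 5) →
      M = {z : ℂ | z = 0 ∨ ∃ k : ℤ, Complex.arg z = k * (Real.pi / 5)} →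
      (∀ r : ℝ, x - (r : ℂ) ∈ M → r = -1 ∨ 0 ≤ r) ∧
      (∀ r : ℝ, y - (r : ℂ) ∈ M → r ≤ 0) ∧
      (∀ r : ℝ, r ≠ -1 → r ≠ 0 → ¬(x - (r : ℂ) ∈ M ∧ y - (r : ℂ) ∈ M)) := by
  intro x y M hx hy hM
  have hpi : 0 < Real.pi := Real.pi_pos
  have hx' : x = Complex.exp (((2 * Real.pi / 5 : ℝ) : ℂ) * Complex.I) := by
    rw [hx]; ring_nf; push_cast; ring_nf
  have hy' : y = Complex.exp (((4 * Real.pi / 5 : ℝ) : ℂ) * Complex.I) := by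
    rw [hy]; ring_nf; push_cast; ring_nf
  have s1 : 0 < Real.sin (Real.pi / 5) :=
    Real.sin_pos_of_pos_of_lt_pi (by linarith) (by linarith)
  have s2 : 0 < Real.sin (2 * Real.pi / 5) :=
    Real.sin_pos_of_pos_of_lt_pi (by linarith) (by linarith)
  have s3 : 0 < Real.sin (3 * Real.pi / 5) :=
    Real.sin_pos_of_pos_of_lt_pi (by linarith) (by linarith)
  have s4 : 0 < Real.sin (4 * Real.pi / 5) :=
    Real.sin_pos_of_pos_of_lt_pi (by linarith) (by linarith)
  have partx : ∀ r : ℝ, x - (r : ℂ) ∈ M → r = -1 ∨ 0 ≤ r := by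
    intro r hm
    rw [hM] at hm
    simp only [Set.mem_setOf_eq] at hm
    rcases hm with h0 | ⟨k, hk⟩
    · exfalso
      have := congrArg Complex.im h0
      rw [hx'] at this
      simp only [Complex.sub_im, Complex.exp_ofReal_mul_I_im, Complex.ofReal_im,
        Complex.zero_im] at this
      linarith
    · rw [hx'] at hk
      obtain ⟨hk0, hk5, heq⟩ := decagon_key (2 * Real.pi / 5) r (by linarith) (by linarith) k hk
      interval_cases k <;> push_cast at heq
      · left
        have e1 : (1 : ℝ) * (Real.pi / 5) - 2 * Real.pi / 5 = -(Real.pi / 5) := by ring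
        have e2 : (1 : ℝ) * (Real.pi / 5) = Real.pi / 5 := by ring
        rw [e1, e2, Real.sin_neg] at heq
        nlinarith
      · right
        have e1 : (2 : ℝ) * (Real.pi / 5) - 2 * Real.pi / 5 = 0 := by ring
        have e2 : (2 : ℝ) * (Real.pi / 5) = 2 * Real.pi / 5 := by ring
        rw [e1, e2, Real.sin_zero] at heq
        nlinarith
      · right
        have e1 : (3 : ℝ) * (Real.pi / 5) - 2 * Real.pi / 5 = Real.pi / 5 := by ring
        have e2 : (3 : ℝ) * (Real.pi / 5) = 3 * Real.pi / 5 := by ring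
        rw [e1, e2] at heq
        nlinarith
      · right
        have e1 : (4 : ℝ) * (Real.pi / 5) - 2 * Real.pi / 5 = 2 * Real.pi / 5 := by ring
        have e2 : (4 : ℝ) * (Real.pi / 5) = 4 * Real.pi / 5 := by ring
        rw [e1, e2] at heq
        nlinarith
  have party : ∀ r : ℝ, y - (r : ℂ) ∈ M → r ≤ 0 := by
    intro r hm
    rw [hM] at hm
    simp only [Set.mem_setOf_eq] at hm
    rcases hm with h0 | ⟨k, hk⟩
    · exfalso
      have := congrArg Complex.im h0
      rw [hy'] at this
      simp only [Complex.sub_im, Complex.exp_ofReal_mul_I_im, Complex.ofReal_im,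
        Complex.zero_im] at this
      linarith
    · rw [hy'] at hk
      obtain ⟨hk0, hk5, heq⟩ := decagon_key (4 * Real.pi / 5) r (by linarith) (by linarith) k hk
      interval_cases k <;> push_cast at heq
      · have e1 : (1 : ℝ) * (Real.pi / 5) - 4 * Real.pi / 5 = -(3 * Real.pi / 5) := by ring
        have e2 : (1 : ℝ) * (Real.pi / 5) = Real.pi / 5 := by ring
        rw [e1, e2, Real.sin_neg] at heq
        nlinarith
      · have e1 : (2 : ℝ) * (Real.pi / 5) - 4 * Real.pi / 5 = -(2 * Real.pi / 5) := by ring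
        have e2 : (2 : ℝ) * (Real.pi / 5) = 2 * Real.pi / 5 := by ring
        rw [e1, e2, Real.sin_neg] at heq
        nlinarith
      · have e1 : (3 : ℝ) * (Real.pi / 5) - 4 * Real.pi / 5 = -(Real.pi / 5) := by ring
        have e2 : (3 : ℝ) * (Real.pi / 5) = 3 * Real.pi / 5 := by ring
        rw [e1, e2, Real.sin_neg] at heq
        nlinarith
      · have e1 : (4 : ℝ) * (Real.pi / 5) - 4 * Real.pi / 5 = 0 := by ring
        have e2 : (4 : ℝ) * (Real.pi / 5) = 4 * Real.pi / 5 := by ring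
        rw [e1, e2, Real.sin_zero] at heq
        nlinarith
  refine ⟨partx, party, ?_⟩
  intro r hr1 hr0 ⟨hmx, hmy⟩
  rcases partx r hmx with h | h
  · exact hr1 h
  · exact hr0 (le_antisymm (party r hmy) h)
end

section
/- Let x be a nonzero complex number. If x⁵ = x^{-5} and (x+1)⁵ = (1/x + 1)⁵, and x is not real, then x ∈ {exp(2πik/5) : k = 1,2,3,4}. -/
open Real Complex

/-- If a nonzero, non-real complex number `x` satisfies `x⁵ = (1/x)⁵` and
`(x+1)⁵ = (1/x+1)⁵`, then `x` is a nontrivial fifth root of unity: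
`x = e^{2πik/5}` for some `k ∈ {1,2,3,4}`. -/
theorem fifth_root_of_unity (x : ℂ) (hx : x ≠ 0) (hre : x.im ≠ 0)
    (h1 : x ^ 5 = (1 / x) ^ 5) (h2 : (x + 1) ^ 5 = (1 / x + 1) ^ 5) :
    ∃ k : ℕ, 1 ≤ k ∧ k ≤ 4 ∧
      x = Complex.exp (2 * Real.pi * Complex.I * k / 5) := by
  have hx1 : x + 1 ≠ 0 := by
    intro h
    have : x = -1 := by linear_combination h
    apply hre; rw [this]; simp
  have h5 : x ^ 5 = 1 := by
    field_simp at h2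
    have h3 : (x + 1) ^ 5 * (x ^ 5 - 1) = 0 := by linear_combination h2
    rcases mul_eq_zero.1 h3 with h | h
    · exact absurd (pow_eq_zero_iff (by norm_num) |>.1 h) hx1
    · linear_combination h
  have hprim := Complex.isPrimitiveRoot_exp 5 (by norm_num)
  obtain ⟨i, hi5, hix⟩ := hprim.eq_pow_of_pow_eq_one h5
  have hi0 : i ≠ 0 := by
    intro h
    apply hre
    rw [← hix, h, pow_zero] at *
    simp [← hix]
  refine ⟨i, Nat.one_le_iff_ne_zero.2 hi0, by omega, ?_⟩
  rw [← hix, ← Complex.exp_nat_mul]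
  congr 1
  ring
end
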